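/- arXiv:2012.05871 — 2 statements merged into one kernel-verified Lean document; each statement's English description precedes it below -/
import Mathlib

section
/- For every function f ∈ L¹([a,b]) with a < b and every ε > 0, there exist a natural number n and vectors α, β, w ∈ ℝⁿ such that the single-hidden-layer network G(x) = Σ_{i=1}^n wᵢ σ(αᵢ x + βᵢ) satisfies ∫_a^b |G(x) − f(x)| dx < ε. -/
/-- Logistic sigmoid function. -/
noncomputable def sigmoid (z : ℝ) : ℝ := 1 / (1 + Real.exp (-z))

/-!
Approximate `f` in `L¹` by a bounded continuous function, and that one, uniformly on `[a, b]`,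
by a finite sum of Heaviside steps `𝟙[c, ∞)`. For `x ≠ c` we have `σ(K (x - c)) → 𝟙[c, ∞)(x)`
as `K → ∞`, so by dominated convergence a network of sufficiently steep sigmoids with the same
outer weights is `L¹`-close to the step sum.
-/

open MeasureTheory Set Filter Topology

theorem sigmoid_eq_real_sigmoid : sigmoid = Real.sigmoid := by
  funext z
  rw [sigmoid, Real.sigmoid_def, one_div]

theorem tendsto_sigmoid_mul_sub_atTop {x c : ℝ} (hx : x ≠ c) :
    Tendsto (fun K : ℝ => sigmoid (K * (x - c))) atTop (𝓝 ((Ici c).indicator 1 x)) := by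
  rw [sigmoid_eq_real_sigmoid]
  rcases hx.lt_or_gt with hlt | hgt
  · rw [indicator_of_notMem (notMem_Ici.2 hlt)]
    exact Real.tendsto_sigmoid_atBot.comp (tendsto_id.atTop_mul_const_of_neg (sub_neg.2 hlt))
  · rw [indicator_of_mem (mem_Ici.2 hgt.le), Pi.one_apply]
    exact Real.tendsto_sigmoid_atTop.comp (tendsto_id.atTop_mul_const (sub_pos.2 hgt))

theorem tendsto_integral_abs_sum_sigmoid_sub {μ : Measure ℝ} [IsFiniteMeasure μ]
    [NullSingletonClass μ] {f : ℝ → ℝ} (hf : Integrable f μ) {n : ℕ} (c d : Fin n → ℝ) :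
    Tendsto (fun K : ℝ => ∫ x, |∑ i, d i * sigmoid (K * (x - c i)) - f x| ∂μ) atTop
      (𝓝 (∫ x, |∑ i, d i * (Ici (c i)).indicator 1 x - f x| ∂μ)) := by
  refine tendsto_integral_filter_of_dominated_convergence (fun x => ∑ i, |d i| + |f x|)
    (Eventually.of_forall fun K => ?_) (Eventually.of_forall fun K => ?_)
    ((integrable_const _).add hf.abs) ?_
  · have hnet : Continuous fun x => ∑ i, d i * sigmoid (K * (x - c i)) := by
      rw [sigmoid_eq_real_sigmoid]; fun_prop
    exact (hnet.aestronglyMeasurable.sub hf.aestronglyMeasurable).norm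
  · refine ae_of_all _ fun x => ?_
    rw [Real.norm_eq_abs, abs_abs]
    refine (abs_sub _ _).trans ?_
    gcongr
    refine (Finset.abs_sum_le_sum_abs _ _).trans (Finset.sum_le_sum fun i _ => ?_)
    rw [abs_mul, sigmoid_eq_real_sigmoid, abs_of_pos (Real.sigmoid_pos _)]
    exact mul_le_of_le_one_right (abs_nonneg _) (Real.sigmoid_le_one _)
  · filter_upwards [(finite_range c).countable.ae_notMem μ] with x hx
    have hxc : ∀ i, x ≠ c i := fun i h => hx ⟨i, h.symm⟩
    exact ((tendsto_finsetSum _ fun i _ =>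
      (tendsto_sigmoid_mul_sub_atTop (hxc i)).const_mul (d i)).sub_const (f x)).abs

theorem sum_range_sub_mul_ite_le {R : Type*} [Ring R] (ψ : ℕ → R) (m N : ℕ) :
    ∑ j ∈ Finset.range m, (ψ (j + 1) - ψ j) * (if j ≤ N then 1 else 0) =
      ψ (min m (N + 1)) - ψ 0 := by
  simp only [mul_ite, mul_one, mul_zero]
  rw [← Finset.sum_filter]
  have : (Finset.range m).filter (· ≤ N) = Finset.range (min m (N + 1)) := by
    ext j
    simp only [Finset.mem_filter, Finset.mem_range]
    omega
  rw [this, Finset.sum_range_sub]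

theorem sub_min_floor_div_mul_mem_Icc {s t : ℝ} (hs : 0 < s) (ht : 0 ≤ t) {m : ℕ}
    (htm : t ≤ (m + 1) * s) : t - min m ⌊t / s⌋₊ * s ∈ Icc 0 s := by
  have hfloor : (⌊t / s⌋₊ : ℝ) * s ≤ t := (le_div_iff₀ hs).1 (Nat.floor_le (div_nonneg ht hs.le))
  rcases min_cases m ⌊t / s⌋₊ with ⟨hmin, hle⟩ | ⟨hmin, hlt⟩
  · rw [hmin]
    have : (m : ℝ) ≤ ⌊t / s⌋₊ := by exact_mod_cast hle
    constructor <;> nlinarith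
  · rw [hmin]
    have := (div_lt_iff₀ hs).1 (Nat.lt_floor_add_one (t / s))
    constructor <;> linarith

theorem exists_sum_indicator_Ici_near {a b : ℝ} (hab : a < b) {g : ℝ → ℝ}
    (hg : ContinuousOn g (Icc a b)) {ε : ℝ} (hε : 0 < ε) :
    ∃ (n : ℕ) (c d : Fin n → ℝ), ∀ x ∈ Icc a b,
      |∑ i, d i * (Ici (c i)).indicator 1 x - g x| < ε := by
  obtain ⟨δ, hδ, hgδ⟩ := Metric.uniformContinuousOn_iff.1
    (isCompact_Icc.uniformContinuousOn_of_continuous hg) ε hε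
  obtain ⟨m, hm⟩ := exists_nat_gt ((b - a) / δ)
  set s := (b - a) / (m + 1)
  have hs : 0 < s := div_pos (sub_pos.2 hab) (by positivity)
  have hsδ : s < δ := by
    rw [div_lt_iff₀ (by positivity)]
    rw [div_lt_iff₀ hδ] at hm
    linarith
  -- `ψ (k + 1)` is `g` at the `k`-th node, so the step sum telescopes to `g` at the last node `≤ x`.
  let ψ : ℕ → ℝ := fun
    | 0 => 0
    | k + 1 => g (a + k * s)
  refine ⟨m + 1, fun j => a + j * s, fun j => ψ (j + 1) - ψ j, fun x hx => ?_⟩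
  set N := ⌊(x - a) / s⌋₊
  have hind : ∀ j : ℕ, (Ici (a + j * s)).indicator (1 : ℝ → ℝ) x = if j ≤ N then 1 else 0 := by
    intro j
    simp only [indicator_apply, mem_Ici, Pi.one_apply, ← le_sub_iff_add_le', ← le_div_iff₀ hs,
      N, Nat.le_floor_iff (div_nonneg (sub_nonneg.2 hx.1) hs.le)]
  rw [Fin.sum_univ_eq_sum_range (fun j => (ψ (j + 1) - ψ j) * (Ici (a + j * s)).indicator 1 x)]
  simp only [hind]
  rw [sum_range_sub_mul_ite_le, Nat.add_min_add_right]
  obtain ⟨hJ₀, hJs⟩ := sub_min_floor_div_mul_mem_Icc hs (sub_nonneg.2 hx.1) (m := m)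
    (by rw [mul_div_cancel₀ _ (by positivity)]; linarith [hx.2])
  have hnode : a + (min m N : ℕ) * s ∈ Icc a b :=
    ⟨le_add_of_nonneg_right (by positivity), by linarith [hx.2]⟩
  have hdist : dist (a + (min m N : ℕ) * s) x < δ := by
    rw [Real.dist_eq, abs_sub_comm, abs_of_nonneg (by linarith)]
    linarith
  simpa [ψ, Real.dist_eq, abs_sub_comm] using hgδ _ hnode x hx hdist

theorem exists_sum_indicator_Ici_integral_sub_lt {a b : ℝ} (hab : a < b) {f : ℝ → ℝ}
    (hf : IntegrableOn f (Icc a b)) {ε : ℝ} (hε : 0 < ε) :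
    ∃ (n : ℕ) (c d : Fin n → ℝ),
      ∫ x in Icc a b, |∑ i, d i * (Ici (c i)).indicator 1 x - f x| < ε := by
  have hba : 0 < b - a := sub_pos.2 hab
  obtain ⟨g, hfg, hg⟩ := hf.exists_boundedContinuous_integral_sub_le (div_pos hε three_pos)
  obtain ⟨n, c, d, hstep⟩ := exists_sum_indicator_Ici_near hab g.continuous.continuousOn
    (div_pos (div_pos hε three_pos) hba)
  refine ⟨n, c, d, ?_⟩
  have hfg_int : IntegrableOn (fun x => ‖f x - g x‖) (Icc a b) := (hf.sub hg).norm
  have hS : IntegrableOn (fun x => ∑ i, d i * (Ici (c i)).indicator 1 x) (Icc a b) :=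
    integrable_finsetSum _ fun i _ =>
      ((integrable_const (1 : ℝ)).indicator measurableSet_Ici).const_mul (d i)
  calc ∫ x in Icc a b, |∑ i, d i * (Ici (c i)).indicator 1 x - f x|
      ≤ ∫ x in Icc a b, (ε / 3 / (b - a) + ‖f x - g x‖) := by
        refine setIntegral_mono_on (hS.sub hf).abs ((integrable_const _).add hfg_int)
          measurableSet_Icc fun x hx => ?_
        rw [Real.norm_eq_abs]
        calc _ ≤ |∑ i, d i * (Ici (c i)).indicator 1 x - g x| + |g x - f x| := abs_sub_le _ _ _
          _ ≤ _ := by linarith [hstep x hx, abs_sub_comm (g x) (f x)]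
    _ = ε / 3 + ∫ x in Icc a b, ‖f x - g x‖ := by
        rw [integral_add (integrable_const _) hfg_int, setIntegral_const,
          Real.volume_real_Icc_of_le hab.le, smul_eq_mul, mul_div_cancel₀ _ hba.ne']
    _ < ε := by linarith

/-- Universal approximation in `L¹`: for every integrable function `f` on `[a,b]` and
every `ε > 0`, there is a single-hidden-layer sigmoid network `G` whose `L¹` distance
to `f` on `[a,b]` is less than `ε`. -/
theorem elm_universal_approx_L1 (a b : ℝ) (hab : a < b) (f : ℝ → ℝ)
    (hf : MeasureTheory.IntegrableOn f (Set.Icc a b)) (ε : ℝ) (hε : 0 < ε) :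
    ∃ (n : ℕ) (α β w : Fin n → ℝ),
      ∫ x in Set.Icc a b, |(∑ i, w i * sigmoid (α i * x + β i)) - f x| < ε := by
  obtain ⟨n, c, d, hstep⟩ := exists_sum_indicator_Ici_integral_sub_lt hab hf hε
  obtain ⟨K, hK⟩ :=
    ((tendsto_integral_abs_sum_sigmoid_sub hf c d).eventually (eventually_lt_nhds hstep)).exists
  refine ⟨n, fun _ => K, fun i => -(K * c i), d, ?_⟩
  simp only [mul_sub] at hK
  simpa only [sub_eq_add_neg] using hK
end

section
/- Let x₁ < x₂ < … < x_n be n distinct real numbers and y₁, …, y_n ∈ ℝ arbitrary values. Then there exist vectors α, β, w ∈ ℝⁿ such that Σ_{i=1}^n wᵢ σ(αᵢ xⱼ + βᵢ) = yⱼ for every j = 1, …, n. -/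
open Filter Topology

-- The value `1 / 2 = σ 0` at `0` makes `σ (t u) → heaviside u` as `t → ∞` hold for every `u`.
noncomputable def heaviside (u : ℝ) : ℝ := if 0 < u then 1 else if u < 0 then 0 else 1 / 2

lemma sigmoid_zero : sigmoid 0 = 1 / 2 := by
  norm_num [sigmoid]

lemma tendsto_sigmoid_atTop : Tendsto sigmoid atTop (𝓝 1) := by
  have h : Tendsto (fun z : ℝ => 1 / (1 + Real.exp (-z))) atTop (𝓝 (1 / (1 + 0))) :=
    tendsto_const_nhds.div (tendsto_const_nhds.add Real.tendsto_exp_neg_atTop_nhds_zero)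
      (by norm_num)
  show Tendsto (fun z : ℝ => 1 / (1 + Real.exp (-z))) atTop _
  simpa using h

lemma tendsto_sigmoid_atBot : Tendsto sigmoid atBot (𝓝 0) := by
  have h : Tendsto (fun z : ℝ => 1 + Real.exp (-z)) atBot atTop :=
    tendsto_atTop_add_const_left _ _ (Real.tendsto_exp_atTop.comp tendsto_neg_atBot_atTop)
  show Tendsto (fun z : ℝ => 1 / (1 + Real.exp (-z))) atBot _
  simpa [Function.comp_def] using tendsto_inv_atTop_zero.comp h

lemma tendsto_sigmoid_mul_atTop (u : ℝ) :
    Tendsto (fun t => sigmoid (t * u)) atTop (𝓝 (heaviside u)) := by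
  rcases lt_trichotomy u 0 with hu | rfl | hu
  · simpa [heaviside, hu, hu.not_gt, Function.comp_def] using
      tendsto_sigmoid_atBot.comp (tendsto_id.atTop_mul_const_of_neg hu)
  · simp [heaviside, sigmoid_zero]
  · simpa [heaviside, hu, Function.comp_def] using
      tendsto_sigmoid_atTop.comp (tendsto_id.atTop_mul_const hu)

lemma det_heaviside_sub {ι : Type*} [Fintype ι] [LinearOrder ι] {x : ι → ℝ}
    (hx : StrictMono x) :
    (Matrix.of fun j i => heaviside (x j - x i)).det = (1 / 2) ^ Fintype.card ι := by
  have hlower : (Matrix.of fun j i => heaviside (x j - x i)).IsLowerTriangular := by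
    intro j i (hij : j < i)
    simp [heaviside, hx hij, (hx hij).not_gt]
  rw [Matrix.det_of_isLowerTriangular _ hlower]
  simp [heaviside]

lemma Matrix.eventually_det_ne_zero_of_tendsto {α m R : Type*} [Fintype m] [DecidableEq m]
    [CommRing R] [TopologicalSpace R] [IsTopologicalRing R] [T1Space R] {l : Filter α}
    {A : α → Matrix m m R} {L : Matrix m m R} (hA : Tendsto A l (𝓝 L)) (hL : L.det ≠ 0) :
    ∀ᶠ a in l, (A a).det ≠ 0 :=
  ((continuous_id.matrix_det.tendsto L).comp hA).eventually_ne hL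

/-- Exact interpolation with `n` neurons at `n` distinct nodes: for any data `(xⱼ, yⱼ)` with
`x₁ < ⋯ < xₙ` there are weights and biases interpolating exactly. -/
theorem elm_exact_interpolation (n : ℕ) (x : Fin n → ℝ) (hx : StrictMono x)
    (y : Fin n → ℝ) :
    ∃ α β w : Fin n → ℝ,
      ∀ j : Fin n, ∑ i, w i * sigmoid (α i * x j + β i) = y j := by
  set A : ℝ → Matrix (Fin n) (Fin n) ℝ := fun t => Matrix.of fun j i => sigmoid (t * (x j - x i))
  have hlim : Tendsto A atTop (𝓝 (Matrix.of fun j i => heaviside (x j - x i))) :=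
    tendsto_pi_nhds.2 fun j => tendsto_pi_nhds.2 fun i => tendsto_sigmoid_mul_atTop _
  have hdet : (Matrix.of fun j i => heaviside (x j - x i)).det ≠ 0 := by
    rw [det_heaviside_sub hx]
    positivity
  obtain ⟨t, ht⟩ := (Matrix.eventually_det_ne_zero_of_tendsto hlim hdet).exists
  obtain ⟨w, hw⟩ := Matrix.mulVec_surjective_iff_isUnit.2
    ((A t).isUnit_iff_isUnit_det.2 (isUnit_iff_ne_zero.2 ht)) y
  refine ⟨fun _ => t, fun i => -(t * x i), w, fun j => ?_⟩
  rw [← hw]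
  simp only [A, Matrix.mulVec, dotProduct, Matrix.of_apply]
  exact Finset.sum_congr rfl fun i _ => by rw [mul_comm, mul_sub, sub_eq_add_neg]
end
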